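/- Let p > q > 1 be coprime integers and m ≥ 2 an integer. If a sequence x : ℕ → ℤ is (ℤ,p/q)-regular, then the sequence n ↦ (x(n) mod m), with values in ℤ/mℤ, is p/q-automatic. -/

import Mathlib

open scoped Classical

/-- The domain of the factor of height `h` of the tree `T(L)` rooted at `w`:
the set of words `v` with `|v| ≤ h` and `wv ∈ L`. -/
def Dset {A : Type*} (L : Set (List A)) (h : ℕ) (w : List A) : Set (List A) :=
  {v | v.length ≤ h ∧ w ++ v ∈ L}

/-- The tree `T(L)` decorated by `d` is `(R,h)`-linear: there is a family of
coefficients `c(D,u,v) ∈ R` such that for every `w ∈ L` and every `u` of length `h`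
with `wu ∈ L`, the decoration `d(wu)` is the linear combination
`Σ_{|v| < h, wv ∈ L} c(D_h(w),u,v) • d(wv)`. -/
def IsLinear {A : Type*} (R : Type*) {M : Type*} [CommRing R] [AddCommMonoid M]
    [Module R M] (L : Set (List A)) (d : List A → M) (h : ℕ) : Prop :=
  ∃ c : Set (List A) → List A → List A → R,
    ∀ w ∈ L, ∀ u : List A, u.length = h → w ++ u ∈ L →
      d (w ++ u) =
        ∑ᶠ v ∈ {v : List A | v.length < h ∧ w ++ v ∈ L},
          c (Dset L h w) u v • d (w ++ v)

/-- `valPQ p q w` is the value in base `p/q` of the word `w`, namely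
`valPQ p q ε = 0` and `valPQ p q (wa) = (p·valPQ p q w + a)/q`. -/
def valPQ (p q : ℕ) (w : List (Fin p)) : ℚ :=
  w.foldl (fun acc a => ((p : ℚ) * acc + (a.val : ℚ)) / (q : ℚ)) 0

/-- The base-`p/q` numeration language: words with nonzero leading digit all of whose
prefixes have a value in `ℕ`. -/
def Lpq (p q : ℕ) : Set (List (Fin p)) :=
  {w | (∀ a, w.head? = some a → a.val ≠ 0) ∧
       ∀ u, u <+: w → ∃ n : ℕ, valPQ p q u = (n : ℚ)}

/-- The decoration of `T(L_{p/q})` induced by a sequence `x`: the node `w` carries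
`x(val_{p/q}(w))` (for `w ∈ L_{p/q}` the value `val_{p/q}(w)` is a natural number). -/
noncomputable def decSeq {M : Type*} (p q : ℕ) (x : ℕ → M) : List (Fin p) → M :=
  fun w => x (valPQ p q w).num.toNat

/-- A sequence is `(R,p/q)`-regular if the decorated tree `T_x(L_{p/q})` is
`(R,h)`-linear for some `h ≥ 1`. -/
def PQRegular {M : Type*} (R : Type*) [CommRing R] [AddCommMonoid M] [Module R M]
    (p q : ℕ) (x : ℕ → M) : Prop :=
  ∃ h : ℕ, 1 ≤ h ∧ IsLinear R (Lpq p q) (decSeq p q x) h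

/-- A sequence `x` is `p/q`-automatic: there is a DFAO (finite state set `Q`, initial
state `q0`, transition `δ`, output `μ`) computing `x(val_{p/q}(w))` for `w ∈ L_{p/q}`,
reading most significant digit first. -/
def PQAutomatic {B : Type*} (p q : ℕ) (x : ℕ → B) : Prop :=
  ∃ (Q : Type) (_ : Fintype Q) (q0 : Q) (δ : Q → Fin p → Q) (μ : Q → B),
    ∀ w ∈ Lpq p q, x (valPQ p q w).num.toNat = μ (w.foldl δ q0)

section Lemmas

variable {p q : ℕ}

lemma valPQ_nil : valPQ p q [] = 0 := rfl

lemma valPQ_concat (w : List (Fin p)) (a : Fin p) :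
    valPQ p q (w ++ [a]) = ((p : ℚ) * valPQ p q w + (a.val : ℚ)) / (q : ℚ) := by
  simp [valPQ, List.foldl_append]

lemma nil_mem_Lpq : ([] : List (Fin p)) ∈ Lpq p q := by
  refine ⟨by simp, fun u hu => ?_⟩
  rw [List.prefix_nil.mp hu]
  exact ⟨0, by simp [valPQ_nil]⟩

lemma Lpq_prefix {w u : List (Fin p)} (hw : w ∈ Lpq p q) (hu : u <+: w) : u ∈ Lpq p q := by
  refine ⟨?_, fun v hv => hw.2 v (hv.trans hu)⟩
  intro a ha
  apply hw.1 a
  obtain ⟨t, rfl⟩ := hu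
  cases u with
  | nil => simp at ha
  | cons b s => simpa using ha

lemma prefix_snoc {u w : List (Fin p)} {a : Fin p} (h : u <+: w ++ [a]) :
    u <+: w ∨ u = w ++ [a] := by
  rcases Nat.lt_or_ge u.length (w ++ [a]).length with hlt | hge
  · left
    have hle : u.length ≤ w.length := by simp at hlt; omega
    have := List.prefix_iff_eq_take.mp h
    rw [List.take_append_of_le_length hle] at this
    rw [this]
    exact List.take_prefix _ _
  · right
    exact List.IsPrefix.eq_of_length h (le_antisymm h.length_le hge)

lemma val_nat_of_mem {w : List (Fin p)} (hw : w ∈ Lpq p q) :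
    ∃ N : ℕ, valPQ p q w = (N : ℚ) := hw.2 w List.prefix_rfl

end Lemmas

section Arith

variable {p q : ℕ}

lemma snoc_dvd_iff (hq : 0 < q) {w : List (Fin p)} {N : ℕ} (hN : valPQ p q w = (N : ℚ))
    (a : Fin p) :
    (∃ n : ℕ, valPQ p q (w ++ [a]) = (n : ℚ)) ↔ q ∣ p * N + a.val := by
  have hq0 : (q : ℚ) ≠ 0 := by positivity
  rw [valPQ_concat, hN]
  constructor
  · rintro ⟨n, hn⟩
    rw [div_eq_iff hq0] at hn
    have : ((p * N + a.val : ℕ) : ℚ) = ((n * q : ℕ) : ℚ) := by push_cast; push_cast at hn; linarith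
    exact Dvd.intro_left n (by exact_mod_cast this.symm)
  · rintro ⟨k, hk⟩
    refine ⟨k, ?_⟩
    rw [div_eq_iff hq0]
    have : ((p * N + a.val : ℕ) : ℚ) = ((q * k : ℕ) : ℚ) := by rw [hk]
    push_cast at this ⊢
    linarith

lemma snoc_val (hq : 0 < q) {w : List (Fin p)} {N : ℕ} (hN : valPQ p q w = (N : ℚ))
    {a : Fin p} (hd : q ∣ p * N + a.val) :
    valPQ p q (w ++ [a]) = (((p * N + a.val) / q : ℕ) : ℚ) := by
  have hq0 : (q : ℚ) ≠ 0 := by positivity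
  rw [valPQ_concat, hN]
  rw [Nat.cast_div hd hq0]
  push_cast
  ring

lemma mem_snoc_iff (hq : 0 < q) {w : List (Fin p)} (hw : w ∈ Lpq p q) (hne : w ≠ [])
    {N : ℕ} (hN : valPQ p q w = (N : ℚ)) (a : Fin p) :
    w ++ [a] ∈ Lpq p q ↔ q ∣ p * N + a.val := by
  constructor
  · intro hmem
    exact (snoc_dvd_iff hq hN a).mp (hmem.2 _ List.prefix_rfl)
  · intro hd
    refine ⟨?_, ?_⟩
    · intro b hb
      apply hw.1 b
      cases w with
      | nil => exact absurd rfl hne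
      | cons c t => simpa using hb
    · intro u hu
      rcases prefix_snoc hu with h1 | h1
      · exact hw.2 u h1
      · rw [h1]
        exact (snoc_dvd_iff hq hN a).mpr hd

end Arith

section Cong

variable {p q : ℕ}

lemma append_cons' (w : List (Fin p)) (a : Fin p) (t : List (Fin p)) :
    w ++ (a :: t) = (w ++ [a]) ++ t := by simp

lemma valcong (hq : 0 < q) (hco : Nat.Coprime p q) :
    ∀ (u w w' : List (Fin p)), w ++ u ∈ Lpq p q → w' ++ u ∈ Lpq p q →
    ∀ N N' : ℕ, valPQ p q w = (N : ℚ) → valPQ p q w' = (N' : ℚ) →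
    N ≡ N' [MOD q ^ u.length] := by
  intro u
  induction u with
  | nil => intro w w' _ _ N N' _ _; simpa using Nat.modEq_one
  | cons a t ih =>
    intro w w' hwL hwL' N N' hN hN'
    rw [append_cons'] at hwL hwL'
    have hpre : w ++ [a] ∈ Lpq p q := Lpq_prefix hwL ⟨t, rfl⟩
    have hpre' : w' ++ [a] ∈ Lpq p q := Lpq_prefix hwL' ⟨t, rfl⟩
    have hd : q ∣ p * N + a.val :=
      (snoc_dvd_iff hq hN a).mp (hpre.2 _ List.prefix_rfl)
    have hd' : q ∣ p * N' + a.val :=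
      (snoc_dvd_iff hq hN' a).mp (hpre'.2 _ List.prefix_rfl)
    have hM : valPQ p q (w ++ [a]) = (((p * N + a.val) / q : ℕ) : ℚ) := snoc_val hq hN hd
    have hM' : valPQ p q (w' ++ [a]) = (((p * N' + a.val) / q : ℕ) : ℚ) := snoc_val hq hN' hd'
    have hih := ih (w ++ [a]) (w' ++ [a]) hwL hwL' _ _ hM hM'
    have h2 : q * ((p * N + a.val) / q) ≡ q * ((p * N' + a.val) / q) [MOD q * q ^ t.length] :=
      Nat.ModEq.mul_left' q hih
    rw [Nat.mul_div_cancel' hd, Nat.mul_div_cancel' hd'] at h2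
    have h3 : p * N ≡ p * N' [MOD q * q ^ t.length] := Nat.ModEq.add_right_cancel' _ h2
    have h4 : N ≡ N' [MOD q * q ^ t.length] := by
      refine Nat.ModEq.cancel_left_of_coprime ?_ h3
      have : Nat.Coprime (q * q ^ t.length) p := by
        exact (Nat.Coprime.mul (hco.symm) ((hco.symm).pow_left _))
      exact this
    simpa [pow_succ, mul_comm] using h4

lemma memcong (hq : 0 < q) (hco : Nat.Coprime p q) :
    ∀ (v w w' : List (Fin p)), w ∈ Lpq p q → w' ∈ Lpq p q → w ≠ [] → w' ≠ [] →
    ∀ N N' : ℕ, valPQ p q w = (N : ℚ) → valPQ p q w' = (N' : ℚ) →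
    N ≡ N' [MOD q ^ v.length] →
    (w ++ v ∈ Lpq p q ↔ w' ++ v ∈ Lpq p q) := by
  intro v
  induction v with
  | nil =>
    intro w w' hw hw' _ _ N N' _ _ _
    simpa using iff_of_true hw hw'
  | cons a t ih =>
    intro w w' hw hw' hne hne' N N' hN hN' hmod
    have hmodq : N ≡ N' [MOD q] :=
      hmod.of_dvd (by simpa using dvd_pow_self q (Nat.succ_ne_zero t.length))
    have hdiff : (p * N + a.val) ≡ (p * N' + a.val) [MOD q] :=
      Nat.ModEq.add_right _ (hmodq.mul_left p)
    rw [append_cons' w, append_cons' w']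
    by_cases hd : q ∣ p * N + a.val
    · have hd' : q ∣ p * N' + a.val := by
        have := (Nat.modEq_zero_iff_dvd).mpr hd
        exact (Nat.modEq_zero_iff_dvd).mp (hdiff.symm.trans this)
      have hmem : w ++ [a] ∈ Lpq p q := (mem_snoc_iff hq hw hne hN a).mpr hd
      have hmem' : w' ++ [a] ∈ Lpq p q := (mem_snoc_iff hq hw' hne' hN' a).mpr hd'
      have hM : valPQ p q (w ++ [a]) = (((p * N + a.val) / q : ℕ) : ℚ) := snoc_val hq hN hd
      have hM' : valPQ p q (w' ++ [a]) = (((p * N' + a.val) / q : ℕ) : ℚ) := snoc_val hq hN' hd'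
      have hmod2 : (p * N + a.val) / q ≡ (p * N' + a.val) / q [MOD q ^ t.length] := by
        have h5 : p * N + a.val ≡ p * N' + a.val [MOD q * q ^ t.length] := by
          have := Nat.ModEq.add_right (a.val) (hmod.mul_left p)
          simpa [pow_succ, mul_comm] using this
        rw [← Nat.mul_div_cancel' hd, ← Nat.mul_div_cancel' hd'] at h5
        exact Nat.ModEq.mul_left_cancel' (by omega : q ≠ 0) h5
      exact ih (w ++ [a]) (w' ++ [a]) hmem hmem' (by simp) (by simp) _ _ hM hM' hmod2
    · have hd' : ¬ q ∣ p * N' + a.val := by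
        intro hc
        exact hd ((Nat.modEq_zero_iff_dvd).mp (hdiff.trans ((Nat.modEq_zero_iff_dvd).mpr hc)))
      constructor
      · intro hc
        exact absurd ((mem_snoc_iff hq hw hne hN a).mp (Lpq_prefix hc ⟨t, rfl⟩)) hd
      · intro hc
        exact absurd ((mem_snoc_iff hq hw' hne' hN' a).mp (Lpq_prefix hc ⟨t, rfl⟩)) hd'

end Cong

section Transfer

variable {p q : ℕ} {h m : ℕ} {x : ℕ → ℤ}

/-- Transfer of the linear relation between two roots with matching windows. -/
lemma lin_transfer {c : Set (List (Fin p)) → List (Fin p) → List (Fin p) → ℤ}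
    (hc : ∀ w ∈ Lpq p q, ∀ u : List (Fin p), u.length = h → w ++ u ∈ Lpq p q →
      decSeq p q x (w ++ u) =
        ∑ᶠ v ∈ {v : List (Fin p) | v.length < h ∧ w ++ v ∈ Lpq p q},
          c (Dset (Lpq p q) h w) u v • decSeq p q x (w ++ v))
    {w₀ w₀' : List (Fin p)} (hw₀ : w₀ ∈ Lpq p q) (hw₀' : w₀' ∈ Lpq p q)
    (hmemiff : ∀ v : List (Fin p), v.length ≤ h → (w₀ ++ v ∈ Lpq p q ↔ w₀' ++ v ∈ Lpq p q))
    (hvals : ∀ v : List (Fin p), v.length < h → w₀ ++ v ∈ Lpq p q →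
      ((decSeq p q x (w₀ ++ v) : ℤ) : ZMod m) = ((decSeq p q x (w₀' ++ v) : ℤ) : ZMod m))
    {s : List (Fin p)} (hs : s.length = h) (hsL : w₀ ++ s ∈ Lpq p q)
    (hsL' : w₀' ++ s ∈ Lpq p q) :
    ((decSeq p q x (w₀ ++ s) : ℤ) : ZMod m) = ((decSeq p q x (w₀' ++ s) : ℤ) : ZMod m) := by
  have hD : Dset (Lpq p q) h w₀ = Dset (Lpq p q) h w₀' := by
    ext v
    exact and_congr_right fun hv => hmemiff v hv
  have hS : {v : List (Fin p) | v.length < h ∧ w₀' ++ v ∈ Lpq p q} =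
      {v : List (Fin p) | v.length < h ∧ w₀ ++ v ∈ Lpq p q} := by
    ext v
    exact and_congr_right fun hv => (hmemiff v hv.le).symm
  rw [hc w₀ hw₀ s hs hsL, hc w₀' hw₀' s hs hsL', hD, hS]
  have hfin : {v : List (Fin p) | v.length < h ∧ w₀ ++ v ∈ Lpq p q}.Finite :=
    (List.finite_length_lt (Fin p) h).subset fun v hv => hv.1
  rw [← hfin.coe_toFinset, finsum_mem_coe_finset, finsum_mem_coe_finset,
    Int.cast_sum, Int.cast_sum]
  apply Finset.sum_congr rfl
  intro v hv
  rw [Set.Finite.mem_toFinset] at hv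
  rw [smul_eq_mul, smul_eq_mul, Int.cast_mul, Int.cast_mul, hvals v hv.1 hv.2]

/-- The master congruence lemma: two roots sharing a valid window `u` of length `h`
and the same small decorated values have the same memberships and values up to depth `h`. -/
lemma window_congr (hq : 1 < q) (hco : Nat.Coprime p q)
    {c : Set (List (Fin p)) → List (Fin p) → List (Fin p) → ℤ}
    (hc : ∀ w ∈ Lpq p q, ∀ u : List (Fin p), u.length = h → w ++ u ∈ Lpq p q →
      decSeq p q x (w ++ u) =
        ∑ᶠ v ∈ {v : List (Fin p) | v.length < h ∧ w ++ v ∈ Lpq p q},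
          c (Dset (Lpq p q) h w) u v • decSeq p q x (w ++ v))
    {w₀ w₀' u : List (Fin p)} (hw₀ : w₀ ∈ Lpq p q) (hw₀' : w₀' ∈ Lpq p q)
    (h0 : w₀ ≠ []) (h0' : w₀' ≠ []) (hu : u.length = h)
    (huL : w₀ ++ u ∈ Lpq p q) (huL' : w₀' ++ u ∈ Lpq p q)
    (hVeq : ∀ v : List (Fin p), v.length < h → w₀ ++ v ∈ Lpq p q →
      ((decSeq p q x (w₀ ++ v) : ℤ) : ZMod m) = ((decSeq p q x (w₀' ++ v) : ℤ) : ZMod m)) :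
    (∀ s : List (Fin p), s.length ≤ h → (w₀ ++ s ∈ Lpq p q ↔ w₀' ++ s ∈ Lpq p q)) ∧
    (∀ s : List (Fin p), s.length ≤ h → w₀ ++ s ∈ Lpq p q →
      ((decSeq p q x (w₀ ++ s) : ℤ) : ZMod m) = ((decSeq p q x (w₀' ++ s) : ℤ) : ZMod m)) := by
  have hq0 : 0 < q := by omega
  obtain ⟨N, hN⟩ := val_nat_of_mem hw₀
  obtain ⟨N', hN'⟩ := val_nat_of_mem hw₀'
  have hcong : N ≡ N' [MOD q ^ h] := by
    have := valcong hq0 hco u w₀ w₀' huL huL' N N' hN hN'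
    rwa [hu] at this
  have hA : ∀ s : List (Fin p), s.length ≤ h → (w₀ ++ s ∈ Lpq p q ↔ w₀' ++ s ∈ Lpq p q) := by
    intro s hs
    exact memcong hq0 hco s w₀ w₀' hw₀ hw₀' h0 h0' N N' hN hN'
      (hcong.of_dvd (pow_dvd_pow q hs))
  refine ⟨hA, ?_⟩
  intro s hs hmem
  rcases Nat.lt_or_ge s.length h with hlt | hge
  · exact hVeq s hlt hmem
  · have hsh : s.length = h := le_antisymm hs hge
    exact lin_transfer hc hw₀ hw₀' hA hVeq hsh hmem ((hA s hs).mp hmem)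

end Transfer

section Automaton

/-- Carrier type for automaton states. -/
abbrev StT (p m : ℕ) : Type :=
  (List (Fin p)) ⊕ ((List (Fin p)) × (List (Fin p) → Option (ZMod m)))

/-- The canonical "window" state associated to a word of length at least `h`. -/
noncomputable def trueState (p q m h : ℕ) (x : ℕ → ℤ) (w : List (Fin p)) : StT p m :=
  Sum.inr (w.drop (w.length - h), fun v =>
    if v.length < h ∧ (w.take (w.length - h)) ++ v ∈ Lpq p q
    then some (((decSeq p q x ((w.take (w.length - h)) ++ v) : ℤ) : ZMod m)) else none)

/-- The predicate stating that a window state is realized by some root `w₀`. -/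
def predS (p q m h : ℕ) (x : ℕ → ℤ) (u : List (Fin p))
    (V : List (Fin p) → Option (ZMod m)) : Prop :=
  ∃ w₀ : List (Fin p), w₀ ∈ Lpq p q ∧ w₀ ≠ [] ∧ u.length = h ∧ w₀ ++ u ∈ Lpq p q ∧
    ∀ v, V v = if v.length < h ∧ w₀ ++ v ∈ Lpq p q
      then some (((decSeq p q x (w₀ ++ v) : ℤ) : ZMod m)) else none

noncomputable def deltaS (p q m h : ℕ) (x : ℕ → ℤ) : StT p m → Fin p → StT p m
  | Sum.inl s, a =>
      if s.length + 1 < 2 * h then Sum.inl (s ++ [a])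
      else trueState p q m h x (s ++ [a])
  | Sum.inr (u, V), a =>
      if hp : predS p q m h x u V then trueState p q m h x (hp.choose ++ u ++ [a])
      else Sum.inr (u.tail ++ [a], fun _ => none)

noncomputable def muS (p q m h : ℕ) (x : ℕ → ℤ) : StT p m → ZMod m
  | Sum.inl s => ((decSeq p q x s : ℤ) : ZMod m)
  | Sum.inr (u, V) =>
      if hp : predS p q m h x u V then ((decSeq p q x (hp.choose ++ u) : ℤ) : ZMod m)
      else 0

lemma trueState_eq (p q m h : ℕ) (x : ℕ → ℤ) (z t : List (Fin p)) (ht : t.length = h) :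
    trueState p q m h x (z ++ t) = Sum.inr (t, fun v =>
      if v.length < h ∧ z ++ v ∈ Lpq p q
      then some (((decSeq p q x (z ++ v) : ℤ) : ZMod m)) else none) := by
  unfold trueState
  have hlen : (z ++ t).length - h = z.length := by simp [ht]
  rw [hlen, List.take_left, List.drop_left]

/-- The finite set of states the automaton stays within. -/
def Fset (p m h : ℕ) : Set (StT p m) :=
  (Sum.inl '' {s : List (Fin p) | s.length < 2 * h}) ∪
  (Sum.inr '' {z : (List (Fin p)) × (List (Fin p) → Option (ZMod m)) |
      z.1.length = h ∧ ∀ v, ¬ v.length < h → z.2 v = none})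

lemma Fset_finite (p m h : ℕ) [NeZero m] : (Fset p m h).Finite := by
  apply Set.Finite.union
  · exact (List.finite_length_lt (Fin p) (2 * h)).image _
  · apply Set.Finite.image
    have h1 : {z : (List (Fin p)) × (List (Fin p) → Option (ZMod m)) |
        z.1.length = h ∧ ∀ v, ¬ v.length < h → z.2 v = none} ⊆
        {u : List (Fin p) | u.length = h} ×ˢ
        {V : List (Fin p) → Option (ZMod m) | ∀ v, ¬ v.length < h → V v = none} := by
      rintro ⟨u, V⟩ ⟨h1, h2⟩
      exact ⟨h1, h2⟩
    refine Set.Finite.subset (Set.Finite.prod ?_ ?_) h1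
    · exact ((List.finite_length_le (Fin p) h).subset fun u hu => hu.le)
    · haveI : Finite {v : List (Fin p) | v.length < h} :=
        (List.finite_length_lt (Fin p) h).to_subtype
      apply Set.Finite.of_finite_image (f := fun V (v : {v : List (Fin p) | v.length < h}) =>
        V v.val)
      · exact Set.toFinite _
      · rintro V hV W hW hVW
        funext v
        by_cases hv : v.length < h
        · exact congrFun hVW ⟨v, hv⟩
        · rw [hV v hv, hW v hv]

lemma trueState_mem_Fset (p q m h : ℕ) (x : ℕ → ℤ) (w : List (Fin p)) (hw : h ≤ w.length) :
    trueState p q m h x w ∈ Fset p m h := by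
  right
  refine ⟨_, ⟨?_, ?_⟩, rfl⟩
  · simp; omega
  · intro v hv
    show (if v.length < h ∧ _ ∈ Lpq p q then _ else none) = none
    rw [if_neg]
    intro hc
    exact hv hc.1

lemma deltaS_mem_Fset (p q m h : ℕ) (x : ℕ → ℤ) (hh : 1 ≤ h)
    {s : StT p m} (hs : s ∈ Fset p m h) (a : Fin p) :
    deltaS p q m h x s a ∈ Fset p m h := by
  rcases hs with ⟨l, hl, rfl⟩ | ⟨⟨u, V⟩, ⟨hu, hV⟩, rfl⟩
  · simp only [deltaS]
    split
    · left
      exact ⟨l ++ [a], by simp; omega, rfl⟩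
    · apply trueState_mem_Fset
      simp only [Set.mem_setOf_eq] at hl
      simp
      omega
  · simp only [deltaS]
    split
    · apply trueState_mem_Fset
      simp only [Set.mem_setOf_eq] at hu
      simp
      omega
    · right
      refine ⟨_, ⟨?_, fun v _ => rfl⟩, rfl⟩
      simp only [Set.mem_setOf_eq] at hu
      simp [hu]
      omega

end Automaton

section PredUnique

variable {p q h m : ℕ} {x : ℕ → ℤ}

lemma pred_unique (hq : 1 < q) (hco : Nat.Coprime p q)
    {c : Set (List (Fin p)) → List (Fin p) → List (Fin p) → ℤ}
    (hc : ∀ w ∈ Lpq p q, ∀ u : List (Fin p), u.length = h → w ++ u ∈ Lpq p q →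
      decSeq p q x (w ++ u) =
        ∑ᶠ v ∈ {v : List (Fin p) | v.length < h ∧ w ++ v ∈ Lpq p q},
          c (Dset (Lpq p q) h w) u v • decSeq p q x (w ++ v))
    {w₀ w₀' u : List (Fin p)} (hw₀ : w₀ ∈ Lpq p q) (hw₀' : w₀' ∈ Lpq p q)
    (h0 : w₀ ≠ []) (h0' : w₀' ≠ []) (hu : u.length = h)
    (huL : w₀ ++ u ∈ Lpq p q) (huL' : w₀' ++ u ∈ Lpq p q)
    (hV : ∀ v : List (Fin p),
      (if v.length < h ∧ w₀' ++ v ∈ Lpq p q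
        then some (((decSeq p q x (w₀' ++ v) : ℤ) : ZMod m)) else none) =
      (if v.length < h ∧ w₀ ++ v ∈ Lpq p q
        then some (((decSeq p q x (w₀ ++ v) : ℤ) : ZMod m)) else none)) :
    (∀ s : List (Fin p), s.length ≤ h → (w₀ ++ s ∈ Lpq p q ↔ w₀' ++ s ∈ Lpq p q)) ∧
    (∀ s : List (Fin p), s.length ≤ h → w₀ ++ s ∈ Lpq p q →
      ((decSeq p q x (w₀ ++ s) : ℤ) : ZMod m) = ((decSeq p q x (w₀' ++ s) : ℤ) : ZMod m)) := by
  have hVeq : ∀ v : List (Fin p), v.length < h → w₀ ++ v ∈ Lpq p q →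
      ((decSeq p q x (w₀ ++ v) : ℤ) : ZMod m) = ((decSeq p q x (w₀' ++ v) : ℤ) : ZMod m) := by
    intro v hv hmem
    have hx := hV v
    rw [if_pos (show v.length < h ∧ w₀ ++ v ∈ Lpq p q from ⟨hv, hmem⟩)] at hx
    by_cases hm' : w₀' ++ v ∈ Lpq p q
    · rw [if_pos (show v.length < h ∧ w₀' ++ v ∈ Lpq p q from ⟨hv, hm'⟩)] at hx
      exact (Option.some.inj hx).symm
    · rw [if_neg (show ¬(v.length < h ∧ w₀' ++ v ∈ Lpq p q) from fun hcc => hm' hcc.2)] at hx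
      exact absurd hx (by simp)
  exact window_congr hq hco hc hw₀ hw₀' h0 h0' hu huL huL' hVeq

end PredUnique

theorem statement12 (p q : ℕ) (hq : 1 < q) (hpq : q < p) (hco : Nat.Coprime p q)
    (m : ℕ) (hm : 2 ≤ m) (x : ℕ → ℤ) (hreg : PQRegular ℤ p q x) :
    PQAutomatic p q (fun n => ((x n : ZMod m))) := by
  obtain ⟨h, hh, c, hc⟩ := hreg
  simp only [smul_eq_mul] at hc
  -- the key invariant
  have key : ∀ w ∈ Lpq p q, List.foldl (deltaS p q m h x) (Sum.inl []) w =
      if w.length < 2 * h then Sum.inl w else trueState p q m h x w := by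
    intro w
    induction w using List.reverseRecOn with
    | nil =>
      intro _
      rw [List.foldl_nil, if_pos (by simpa using by omega : ([] : List (Fin p)).length < 2 * h)]
    | append_singleton w a ih =>
      intro hmem
      have hwL : w ∈ Lpq p q := Lpq_prefix hmem ⟨[a], rfl⟩
      rw [List.foldl_append, ih hwL, List.foldl_cons, List.foldl_nil]
      have hlen : (w ++ [a]).length = w.length + 1 := by simp
      by_cases h1 : w.length + 1 < 2 * h
      · rw [if_pos (by omega : w.length < 2 * h)]
        show deltaS p q m h x (Sum.inl w) a = _
        rw [if_pos (by omega : (w ++ [a]).length < 2 * h)]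
        simp only [deltaS]
        rw [if_pos h1]
      · by_cases h2 : w.length < 2 * h
        · rw [if_pos h2]
          show deltaS p q m h x (Sum.inl w) a = _
          rw [if_neg (by omega : ¬ (w ++ [a]).length < 2 * h)]
          simp only [deltaS]
          rw [if_neg h1]
        · rw [if_neg h2]
          set n := w.length with hn
          have h2n : 2 * h ≤ n := by omega
          have hdecomp : w.take (n - h) ++ w.drop (n - h) = w := List.take_append_drop _ _
          set w₀ := w.take (n - h) with hw₀def
          set u := w.drop (n - h) with hudef
          clear_value w₀ u
          have hu : u.length = h := by
            rw [hudef]; simp [hn]; omega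
          have hts : trueState p q m h x w = Sum.inr (u, fun v =>
              if v.length < h ∧ w₀ ++ v ∈ Lpq p q
              then some (((decSeq p q x (w₀ ++ v) : ℤ) : ZMod m)) else none) := by
            conv_lhs => rw [← hdecomp]
            exact trueState_eq p q m h x w₀ u hu
          rw [if_neg (show ¬ (w ++ [a]).length < 2 * h by rw [hlen]; omega), hts]
          have hw₀L : w₀ ∈ Lpq p q :=
            Lpq_prefix hwL (by rw [hw₀def]; exact List.take_prefix _ _)
          have hw₀ne : w₀ ≠ [] := by
            intro hc0
            have := congrArg List.length hc0
            simp [hw₀def] at this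
            rcases this with h0 | h0
            · omega
            · have hlen0 : w.length = 0 := by rw [h0]; rfl
              omega
          have huL : w₀ ++ u ∈ Lpq p q := by rw [hdecomp]; exact hwL
          have hpred : predS p q m h x u (fun v =>
              if v.length < h ∧ w₀ ++ v ∈ Lpq p q
              then some (((decSeq p q x (w₀ ++ v) : ℤ) : ZMod m)) else none) :=
            ⟨w₀, hw₀L, hw₀ne, hu, huL, fun v => rfl⟩
          show deltaS p q m h x (Sum.inr _) a = _
          simp only [deltaS]
          rw [dif_pos hpred]
          obtain ⟨hcW, hcNe, hcU, hcUL, hcV⟩ := hpred.choose_spec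
          set w₀' := hpred.choose with hw₀'def
          obtain ⟨hiff, hval⟩ := pred_unique hq hco hc hw₀L hcW hw₀ne hcNe hu huL hcUL
            (fun v => (hcV v).symm)
          -- decompose u
          obtain ⟨b, u', rfl⟩ : ∃ b u'', u = b :: u'' := by
            cases u with
            | nil => exact absurd hu (by simp; omega)
            | cons b u'' => exact ⟨b, u'', rfl⟩
          have hu' : (u' ++ [a]).length = h := by
            simp at hu ⊢; omega
          have e1 : w₀' ++ (b :: u') ++ [a] = (w₀' ++ [b]) ++ (u' ++ [a]) := by simp
          have e2 : w ++ [a] = (w₀ ++ [b]) ++ (u' ++ [a]) := by rw [← hdecomp]; simp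
          rw [e1, e2, trueState_eq p q m h x _ _ hu', trueState_eq p q m h x _ _ hu']
          refine congrArg Sum.inr (Prod.ext rfl ?_)
          funext v
          show (if v.length < h ∧ (w₀' ++ [b]) ++ v ∈ Lpq p q then _ else none)
            = (if v.length < h ∧ (w₀ ++ [b]) ++ v ∈ Lpq p q then _ else none)
          have ea : (w₀' ++ [b]) ++ v = w₀' ++ (b :: v) := by simp
          have eb : (w₀ ++ [b]) ++ v = w₀ ++ (b :: v) := by simp
          rw [ea, eb]
          by_cases hv : v.length < h
          · have hlen2 : (b :: v).length ≤ h := by simp; omega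
            have hiff2 := hiff (b :: v) hlen2
            by_cases hmem2 : w₀ ++ (b :: v) ∈ Lpq p q
            · rw [if_pos (show v.length < h ∧ w₀' ++ (b :: v) ∈ Lpq p q from
                  ⟨hv, hiff2.mp hmem2⟩),
                if_pos (show v.length < h ∧ w₀ ++ (b :: v) ∈ Lpq p q from ⟨hv, hmem2⟩)]
              exact congrArg some (hval (b :: v) hlen2 hmem2).symm
            · rw [if_neg (show ¬(v.length < h ∧ w₀' ++ (b :: v) ∈ Lpq p q) from
                  fun hcc => hmem2 (hiff2.mpr hcc.2)),
                if_neg (show ¬(v.length < h ∧ w₀ ++ (b :: v) ∈ Lpq p q) from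
                  fun hcc => hmem2 hcc.2)]
          · rw [if_neg (fun hcc => hv hcc.1), if_neg (fun hcc => hv hcc.1)]
  -- assemble the automaton
  haveI : NeZero m := ⟨by omega⟩
  haveI : Fintype ↥(Fset p m h) := (Fset_finite p m h).fintype
  refine ⟨{s : StT p m // s ∈ Fset p m h}, inferInstance,
    ⟨Sum.inl [], Or.inl ⟨[], by simp; omega, rfl⟩⟩,
    fun s a => ⟨deltaS p q m h x s.val a, deltaS_mem_Fset p q m h x hh s.2 a⟩,
    fun s => muS p q m h x s.val, ?_⟩
  intro w hw
  have hfold : ∀ (w : List (Fin p)) (s : {s : StT p m // s ∈ Fset p m h}),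
      (List.foldl (fun s a => (⟨deltaS p q m h x s.val a,
        deltaS_mem_Fset p q m h x hh s.2 a⟩ : {s : StT p m // s ∈ Fset p m h})) s w).val =
      List.foldl (deltaS p q m h x) s.val w := by
    intro w
    induction w with
    | nil => intro s; rfl
    | cons a t ih => intro s; rw [List.foldl_cons, List.foldl_cons, ih]
  show ((x (valPQ p q w).num.toNat : ℤ) : ZMod m) = muS p q m h x _
  rw [hfold, key w hw]
  by_cases h2 : w.length < 2 * h
  · rw [if_pos h2]
    rfl
  · rw [if_neg h2]
    set n := w.length with hn
    have h2n : 2 * h ≤ n := by omega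
    have hdecomp : w.take (n - h) ++ w.drop (n - h) = w := List.take_append_drop _ _
    set w₀ := w.take (n - h) with hw₀def
    set u := w.drop (n - h) with hudef
    have hu : u.length = h := by rw [hudef]; simp [hn]; omega
    have hts : trueState p q m h x w = Sum.inr (u, fun v =>
        if v.length < h ∧ w₀ ++ v ∈ Lpq p q
        then some (((decSeq p q x (w₀ ++ v) : ℤ) : ZMod m)) else none) := by
      conv_lhs => rw [← hdecomp]
      exact trueState_eq p q m h x w₀ u hu
    rw [hts]
    have hw₀L : w₀ ∈ Lpq p q := Lpq_prefix hw (List.take_prefix _ _)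
    have hw₀ne : w₀ ≠ [] := by
      intro hc0
      have := congrArg List.length hc0
      simp [hw₀def] at this
      rcases this with h0 | h0
      · omega
      · have hlen0 : w.length = 0 := by rw [h0]; rfl
        omega
    have huL : w₀ ++ u ∈ Lpq p q := by rw [hdecomp]; exact hw
    have hpred : predS p q m h x u (fun v =>
        if v.length < h ∧ w₀ ++ v ∈ Lpq p q
        then some (((decSeq p q x (w₀ ++ v) : ℤ) : ZMod m)) else none) :=
      ⟨w₀, hw₀L, hw₀ne, hu, huL, fun v => rfl⟩
    simp only [muS]
    rw [dif_pos hpred]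
    obtain ⟨hcW, hcNe, hcU, hcUL, hcV⟩ := hpred.choose_spec
    obtain ⟨hiff, hval⟩ := pred_unique hq hco hc hw₀L hcW hw₀ne hcNe hu huL hcUL
      (fun v => (hcV v).symm)
    have := hval u hu.le huL
    have hgoal : ((decSeq p q x (w₀ ++ u) : ℤ) : ZMod m)
        = ((decSeq p q x (hpred.choose ++ u) : ℤ) : ZMod m) := this
    rw [← hgoal, hdecomp]
    rfl
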